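/- arXiv:math/9808137 — 5 statements merged into one kernel-verified Lean document; each statement's English description precedes it below -/
import Mathlib

section
/- Let Θ₀, Θ₁ : U → ℂ be holomorphic on an open set U ⊆ ℂ⁴. Then the Lax pair commutes, i.e. [L₀(λ), L₁(λ)] = 0 on U for every λ ∈ ℂ, if and only if the pair (Θ₀,Θ₁) satisfies the hyper-Hermitian equation E₀ = E₁ = 0 on U. -/
noncomputable section

/-- Points of `ℂ⁴`, with coordinates `p = (x, y, w, z)`. -/
abbrev V4 : Type := ℂ × ℂ × ℂ × ℂ

/-- Coordinate directions. -/
def eX : V4 := (1, 0, 0, 0)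
def eY : V4 := (0, 1, 0, 0)
def eW : V4 := (0, 0, 1, 0)
def eZ : V4 := (0, 0, 0, 1)

/-- Directional (partial) derivative of `f` along the constant direction `v`. -/
def pd (v : V4) (f : V4 → ℂ) : V4 → ℂ := fun p => fderiv ℂ f p v

/-- The hyper-Hermitian expression
`E_C = ∂²Θ_C/∂x∂w + ∂²Θ_C/∂y∂z + (∂Θ₀/∂x − ∂Θ₁/∂y)·∂²Θ_C/∂x∂y
      + (∂Θ₁/∂x)·∂²Θ_C/∂y² − (∂Θ₀/∂y)·∂²Θ_C/∂x²`. -/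
def hhE (Θ0 Θ1 ΘC : V4 → ℂ) : V4 → ℂ := fun p =>
  pd eX (pd eW ΘC) p + pd eY (pd eZ ΘC) p
    + (pd eX Θ0 p - pd eY Θ1 p) * pd eX (pd eY ΘC) p
    + pd eX Θ1 p * pd eY (pd eY ΘC) p
    - pd eY Θ0 p * pd eX (pd eX ΘC) p

/-- Lie bracket of vector fields on `ℂ⁴`, identified with maps `V4 → V4`:
`[V,W] := (DW)V − (DV)W`. -/
def bracket (Vf Wf : V4 → V4) : V4 → V4 := fun p =>
  fderiv ℂ Wf p (Vf p) - fderiv ℂ Vf p (Wf p)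

/-- `∇₀₀′ = ∂/∂y`. -/
def nab00 : V4 → V4 := fun _ => eY

/-- `∇₁₀′ = −∂/∂x`. -/
def nab10 : V4 → V4 := fun _ => -eX

/-- `∇₀₁′ = ∂/∂w − (∂Θ₁/∂y)·∂/∂y − (∂Θ₀/∂y)·∂/∂x`. -/
def nab01 (Θ0 Θ1 : V4 → ℂ) : V4 → V4 := fun p =>
  eW - pd eY Θ1 p • eY - pd eY Θ0 p • eX

/-- `∇₁₁′ = ∂/∂z + (∂Θ₁/∂x)·∂/∂y + (∂Θ₀/∂x)·∂/∂x`. -/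
def nab11 (Θ0 Θ1 : V4 → ℂ) : V4 → V4 := fun p =>
  eZ + pd eX Θ1 p • eY + pd eX Θ0 p • eX

/-- The Lax pair `L₀(λ) := ∇₀₀′ − λ∇₀₁′`. -/
def lax0 (Θ0 Θ1 : V4 → ℂ) (lam : ℂ) : V4 → V4 := fun p =>
  nab00 p - lam • nab01 Θ0 Θ1 p

/-- The Lax pair `L₁(λ) := ∇₁₀′ − λ∇₁₁′`. -/
def lax1 (Θ0 Θ1 : V4 → ℂ) (lam : ℂ) : V4 → V4 := fun p =>
  nab10 p - lam • nab11 Θ0 Θ1 p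

/-!
Both Lax operators are affine in `λ`, so `[L₀(λ), L₁(λ)]` is a polynomial of degree two in `λ`.
Its linear coefficient is `∂ₓ∂ᵧΘ_C − ∂ᵧ∂ₓΘ_C` in each component and vanishes by symmetry of
second derivatives, while its quadratic coefficient is `E₀ ∂/∂x + E₁ ∂/∂y`. Hence
`[L₀(λ), L₁(λ)] = λ² (E₀ ∂/∂x + E₁ ∂/∂y)`.
-/

section PartialDerivatives

variable {f : V4 → ℂ} {p : V4}

lemma fderiv_pd_apply (v w : V4) : fderiv ℂ (pd w f) p v = pd v (pd w f) p := rfl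

lemma AnalyticAt.pd (hf : AnalyticAt ℂ f p) (v : V4) : AnalyticAt ℂ (pd v f) p :=
  ((ContinuousLinearMap.apply ℂ ℂ v).analyticAt (fderiv ℂ f p)).comp hf.fderiv

lemma pd_pd_eq_fderiv_fderiv (hf : AnalyticAt ℂ f p) (v w : V4) :
    pd v (pd w f) p = fderiv ℂ (fderiv ℂ f) p v w := by
  change fderiv ℂ (fun q => fderiv ℂ f q w) p v = _
  rw [fderiv_clm_apply hf.fderiv.differentiableAt (differentiableAt_const w)]
  simp

lemma pd_pd_comm (hf : AnalyticAt ℂ f p) (v w : V4) :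
    pd v (pd w f) p = pd w (pd v f) p := by
  have hsymm := (hf.contDiffAt (n := 2)).isSymmSndFDerivAt
    (by simp [minSmoothness_of_isRCLikeNormedField])
  rw [pd_pd_eq_fderiv_fderiv hf, pd_pd_eq_fderiv_fderiv hf]
  exact hsymm v w

lemma hasFDerivAt_pd_smul (hf : AnalyticAt ℂ f p) (v u : V4) :
    HasFDerivAt (fun q => pd v f q • u) ((fderiv ℂ (pd v f) p).smulRight u) p :=
  (hf.pd v).differentiableAt.hasFDerivAt.smul_const u

end PartialDerivatives

lemma smul_eX_add_smul_eY_eq_zero_iff {a b : ℂ} : a • eX + b • eY = 0 ↔ a = 0 ∧ b = 0 := by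
  simp [eX, eY, Prod.ext_iff]

section LaxPair

variable {Θ0 Θ1 : V4 → ℂ} {p : V4}

lemma hasFDerivAt_nab01 (h0 : AnalyticAt ℂ Θ0 p) (h1 : AnalyticAt ℂ Θ1 p) :
    HasFDerivAt (nab01 Θ0 Θ1)
      (-((fderiv ℂ (pd eY Θ1) p).smulRight eY + (fderiv ℂ (pd eY Θ0) p).smulRight eX)) p :=
  (((hasFDerivAt_const eW p).sub (hasFDerivAt_pd_smul h1 eY eY)).sub
    (hasFDerivAt_pd_smul h0 eY eX)).congr_fderiv (by abel)

lemma hasFDerivAt_nab11 (h0 : AnalyticAt ℂ Θ0 p) (h1 : AnalyticAt ℂ Θ1 p) :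
    HasFDerivAt (nab11 Θ0 Θ1)
      ((fderiv ℂ (pd eX Θ1) p).smulRight eY + (fderiv ℂ (pd eX Θ0) p).smulRight eX) p :=
  (((hasFDerivAt_const eZ p).add (hasFDerivAt_pd_smul h1 eX eY)).add
    (hasFDerivAt_pd_smul h0 eX eX)).congr_fderiv (by rw [zero_add])

theorem bracket_lax_eq (h0 : AnalyticAt ℂ Θ0 p) (h1 : AnalyticAt ℂ Θ1 p) (lam : ℂ) :
    bracket (lax0 Θ0 Θ1 lam) (lax1 Θ0 Θ1 lam) p
      = lam ^ 2 • (hhE Θ0 Θ1 Θ0 p • eX + hhE Θ0 Θ1 Θ1 p • eY) := by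
  have hL0 : HasFDerivAt (lax0 Θ0 Θ1 lam) _ p :=
    ((hasFDerivAt_nab01 h0 h1).const_smul lam).const_sub eY
  have hL1 : HasFDerivAt (lax1 Θ0 Θ1 lam) _ p :=
    ((hasFDerivAt_nab11 h0 h1).const_smul lam).const_sub (-eX)
  rw [bracket, hL0.fderiv, hL1.fderiv]
  simp only [lax0, lax1, nab00, nab10, nab01, nab11, map_sub, map_add, map_smul, map_neg,
    neg_apply, add_apply, smul_apply, ContinuousLinearMap.smulRight_apply, fderiv_pd_apply]
  rw [pd_pd_comm h0 eW eX, pd_pd_comm h0 eZ eY, pd_pd_comm h0 eY eX,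
    pd_pd_comm h1 eW eX, pd_pd_comm h1 eZ eY, pd_pd_comm h1 eY eX]
  unfold hhE
  match_scalars <;> ring

end LaxPair

theorem lax_commutes_iff_hyperHermitian_general
    (U : Set V4) (Θ0 Θ1 : V4 → ℂ)
    (hΘ0 : ∀ p ∈ U, AnalyticAt ℂ Θ0 p) (hΘ1 : ∀ p ∈ U, AnalyticAt ℂ Θ1 p) :
    (∀ lam : ℂ, ∀ p ∈ U, bracket (lax0 Θ0 Θ1 lam) (lax1 Θ0 Θ1 lam) p = 0) ↔
      (∀ p ∈ U, hhE Θ0 Θ1 Θ0 p = 0 ∧ hhE Θ0 Θ1 Θ1 p = 0) := by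
  constructor
  · intro hcomm p hp
    have h := hcomm 1 p hp
    rwa [bracket_lax_eq (hΘ0 p hp) (hΘ1 p hp), one_pow, one_smul,
      smul_eX_add_smul_eY_eq_zero_iff] at h
  · intro hE lam p hp
    rw [bracket_lax_eq (hΘ0 p hp) (hΘ1 p hp),
      smul_eX_add_smul_eY_eq_zero_iff.mpr (hE p hp), smul_zero]

/-- for holomorphic `Θ₀, Θ₁` on an open `U ⊆ ℂ⁴`, the Lax pair commutes
on `U` for every `λ ∈ ℂ` iff `(Θ₀, Θ₁)` satisfies the hyper-Hermitian equation
`E₀ = E₁ = 0` on `U`. -/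
theorem lax_commutes_iff_hyperHermitian
    (U : Set V4) (hU : IsOpen U) (Θ0 Θ1 : V4 → ℂ)
    (hΘ0 : ∀ p ∈ U, AnalyticAt ℂ Θ0 p) (hΘ1 : ∀ p ∈ U, AnalyticAt ℂ Θ1 p) :
    (∀ lam : ℂ, ∀ p ∈ U, bracket (lax0 Θ0 Θ1 lam) (lax1 Θ0 Θ1 lam) p = 0) ↔
      (∀ p ∈ U, hhE Θ0 Θ1 Θ0 p = 0 ∧ hhE Θ0 Θ1 Θ1 p = 0) :=
  lax_commutes_iff_hyperHermitian_general U Θ0 Θ1 hΘ0 hΘ1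
end
end

section
/- Let F₀, F₁ : V → ℂ be holomorphic on an open set V ⊆ ℂ², write ρ := w·x + y·z, and let U := { (x,y,w,z) ∈ ℂ⁴ : ρ ≠ 0 and (w/ρ, z/ρ) ∈ V }. Define Θ_C(x,y,w,z) := (1/ρ)·F_C(w/ρ, z/ρ) for C ∈ {0,1}. Then on U both the linear part and the nonlinear part of the hyper-Hermitian equation vanish separately: L₀ = L₁ = 0 and N₀ = N₁ = 0; in particular (Θ₀,Θ₁) satisfies the hyper-Hermitian equation E₀ = E₁ = 0 on U. -/
noncomputable section

/-- Linear part `L_C := ∂²Θ_C/∂x∂w + ∂²Θ_C/∂y∂z` of the hyper-Hermitian expression. -/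
def hhL (ΘC : V4 → ℂ) : V4 → ℂ := fun p =>
  pd eX (pd eW ΘC) p + pd eY (pd eZ ΘC) p

/-- Nonlinear part `N_C := E_C − L_C` of the hyper-Hermitian expression. -/
def hhN (Θ0 Θ1 ΘC : V4 → ℂ) : V4 → ℂ := fun p =>
  hhE Θ0 Θ1 ΘC p - hhL ΘC p

/-- `ρ := w·x + y·z` for `p = (x, y, w, z)`. -/
def rho : V4 → ℂ := fun p => p.2.2.1 * p.1 + p.2.1 * p.2.2.2

/-!
Both Θ_C are of the form `g_C ∘ π` with `π(x, y, w, z) = (ρ, w, z)` and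
`g_C(r, w, z) = r⁻¹ F_C(w/r, z/r)`. On such functions `∂_x = w ∂_ρ` and `∂_y = z ∂_ρ`, so every
second derivative in the nonlinear part is a multiple of `∂²_ρ g_C`, and the coefficients cancel.
For the linear part, the chain rule gives `L(g ∘ π) = (∂_ρ (g + E g)) ∘ π` with `E` the Euler
operator of `ℂ³`; since `g_C` is homogeneous of degree `-1`, `E g_C = -g_C`.
-/

open Filter Topology

theorem hhE_eq_hhL_add_hhN (Θ0 Θ1 ΘC : V4 → ℂ) (p : V4) :
    hhE Θ0 Θ1 ΘC p = hhL ΘC p + hhN Θ0 Θ1 ΘC p :=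
  (add_sub_cancel _ _).symm

section Euler

variable {𝕜 E F : Type*} [NontriviallyNormedField 𝕜] [NormedAddCommGroup E] [NormedSpace 𝕜 E]
  [NormedAddCommGroup F] [NormedSpace 𝕜 F]

theorem fderiv_apply_self_of_homogeneous {f : E → F} {x : E} (k : ℤ)
    (hf : DifferentiableAt 𝕜 f x) (hom : ∀ᶠ t in 𝓝 (1 : 𝕜), f (t • x) = t ^ k • f x) :
    fderiv 𝕜 f x x = (k : 𝕜) • f x := by
  have hline : HasDerivAt (fun t : 𝕜 => t • x) x 1 := by
    simpa using (hasDerivAt_id (1 : 𝕜)).smul_const x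
  have hf1 : HasFDerivAt f (fderiv 𝕜 f x) ((1 : 𝕜) • x) := by
    simpa using hf.hasFDerivAt
  have hpow : HasDerivAt (fun t : 𝕜 => t ^ k • f x) ((k : 𝕜) • f x) 1 := by
    simpa using (hasDerivAt_zpow k (1 : 𝕜) (Or.inl one_ne_zero)).smul_const (f x)
  exact (hf1.comp_hasDerivAt 1 hline).unique (hpow.congr_of_eventuallyEq hom)

end Euler

def rhoWZ (p : V4) : ℂ × ℂ × ℂ := (rho p, p.2.2.1, p.2.2.2)

def eRho : ℂ × ℂ × ℂ := (1, 0, 0)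

/-- The polarization of `rho`: `rhoPolar p p = 2 * rho p`. -/
def rhoPolar (u v : V4) : ℂ :=
  u.2.2.1 * v.1 + v.2.2.1 * u.1 + u.2.1 * v.2.2.2 + v.2.1 * u.2.2.2

theorem differentiable_rhoWZ : Differentiable ℂ rhoWZ := by
  unfold rhoWZ rho
  fun_prop

theorem fderiv_rhoWZ_apply (p v : V4) :
    fderiv ℂ rhoWZ p v = (rhoPolar p v, v.2.2.1, v.2.2.2) := by
  have hX := (hasFDerivAt_id (𝕜 := ℂ) p).fst
  have hY := (hasFDerivAt_id (𝕜 := ℂ) p).snd.fst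
  have hW := (hasFDerivAt_id (𝕜 := ℂ) p).snd.snd.fst
  have hZ := (hasFDerivAt_id (𝕜 := ℂ) p).snd.snd.snd
  have h : HasFDerivAt rhoWZ _ p := ((hW.mul hX).add (hY.mul hZ)).prodMk (hW.prodMk hZ)
  rw [h.fderiv]
  simp [rhoPolar]
  ring

theorem fderiv_fderiv_rhoWZ_apply (p u v : V4) :
    fderiv ℂ (fun p' : V4 => fderiv ℂ rhoWZ p' v) p u = rhoPolar u v • eRho := by
  have hX := (hasFDerivAt_id (𝕜 := ℂ) p).fst
  have hY := (hasFDerivAt_id (𝕜 := ℂ) p).snd.fst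
  have hW := (hasFDerivAt_id (𝕜 := ℂ) p).snd.snd.fst
  have hZ := (hasFDerivAt_id (𝕜 := ℂ) p).snd.snd.snd
  have h : HasFDerivAt (fun p' : V4 => ((rhoPolar p' v, v.2.2.1, v.2.2.2) : ℂ × ℂ × ℂ)) _ p :=
    ((((hW.mul_const v.1).add (hX.const_mul v.2.2.1)).add (hY.mul_const v.2.2.2)).add
      (hZ.const_mul v.2.1)).prodMk
      ((hasFDerivAt_const v.2.2.1 p).prodMk (hasFDerivAt_const v.2.2.2 p))
  simp only [fderiv_rhoWZ_apply, h.fderiv]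
  simp [rhoPolar, eRho]
  ring

theorem fderiv_rhoWZ_eX (p : V4) : fderiv ℂ rhoWZ p eX = p.2.2.1 • eRho := by
  simp [fderiv_rhoWZ_apply, rhoPolar, eX, eRho]

theorem fderiv_rhoWZ_eY (p : V4) : fderiv ℂ rhoWZ p eY = p.2.2.2 • eRho := by
  simp [fderiv_rhoWZ_apply, rhoPolar, eY, eRho]

section CompRhoWZ

variable {g : ℂ × ℂ × ℂ → ℂ} {p : V4}

theorem pd_comp_rhoWZ (hg : DifferentiableAt ℂ g (rhoWZ p)) (v : V4) :
    pd v (g ∘ rhoWZ) p = fderiv ℂ g (rhoWZ p) (fderiv ℂ rhoWZ p v) := by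
  rw [pd, fderiv_comp p hg differentiable_rhoWZ.differentiableAt, ContinuousLinearMap.comp_apply]

theorem pd_pd_comp_rhoWZ (hg : ContDiffAt ℂ 2 g (rhoWZ p)) (u v : V4) :
    pd u (pd v (g ∘ rhoWZ)) p = rhoPolar u v • fderiv ℂ g (rhoWZ p) eRho
      + fderiv ℂ (fderiv ℂ g) (rhoWZ p) (fderiv ℂ rhoWZ p u) (fderiv ℂ rhoWZ p v) := by
  have hnear : pd v (g ∘ rhoWZ) =ᶠ[𝓝 p] fun p' => fderiv ℂ g (rhoWZ p') (fderiv ℂ rhoWZ p' v) := by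
    have hdiff : ∀ᶠ p' in 𝓝 p, DifferentiableAt ℂ g (rhoWZ p') :=
      differentiable_rhoWZ.continuous.continuousAt.eventually
        ((hg.eventually (by simp)).mono fun q hq => hq.differentiableAt (by norm_num))
    exact hdiff.mono fun p' h => pd_comp_rhoWZ h v
  have hD : DifferentiableAt ℂ (fderiv ℂ g) (rhoWZ p) :=
    (hg.fderiv_right (m := 1) le_rfl).differentiableAt one_ne_zero
  have hdv : DifferentiableAt ℂ (fun p' : V4 => fderiv ℂ rhoWZ p' v) p := by
    simp only [fderiv_rhoWZ_apply, rhoPolar]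
    fun_prop
  rw [pd, hnear.fderiv_eq, fderiv_clm_apply (c := fun p' => fderiv ℂ g (rhoWZ p'))
    (hD.comp p differentiable_rhoWZ.differentiableAt) hdv,
    fderiv_fun_comp p hD differentiable_rhoWZ.differentiableAt]
  simp [fderiv_fderiv_rhoWZ_apply]

theorem hhN_comp_rhoWZ {g0 g1 : ℂ × ℂ × ℂ → ℂ} (h0 : DifferentiableAt ℂ g0 (rhoWZ p))
    (h1 : DifferentiableAt ℂ g1 (rhoWZ p)) (hg : ContDiffAt ℂ 2 g (rhoWZ p)) :
    hhN (g0 ∘ rhoWZ) (g1 ∘ rhoWZ) (g ∘ rhoWZ) p = 0 := by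
  simp only [hhN, hhE, hhL, pd_comp_rhoWZ h0, pd_comp_rhoWZ h1, pd_pd_comp_rhoWZ hg,
    fderiv_rhoWZ_eX, fderiv_rhoWZ_eY, map_smul, smul_apply, smul_eq_mul]
  simp [rhoPolar, eX, eY]
  ring

theorem hhL_comp_rhoWZ (hg : ContDiffAt ℂ 2 g (rhoWZ p)) :
    hhL (g ∘ rhoWZ) p = fderiv ℂ g (rhoWZ p) eRho
      + fderiv ℂ (fun q => fderiv ℂ g q q) (rhoWZ p) eRho := by
  have hD : DifferentiableAt ℂ (fderiv ℂ g) (rhoWZ p) :=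
    (hg.fderiv_right (m := 1) le_rfl).differentiableAt one_ne_zero
  have hwz : p.2.2.1 • fderiv ℂ rhoWZ p eW + p.2.2.2 • fderiv ℂ rhoWZ p eZ = rhoWZ p := by
    simp [fderiv_rhoWZ_apply, rhoPolar, eW, eZ, rhoWZ, rho]
    ring
  have hsum : ∀ B : ℂ × ℂ × ℂ →L[ℂ] ℂ × ℂ × ℂ →L[ℂ] ℂ,
      B (p.2.2.1 • eRho) (fderiv ℂ rhoWZ p eW) + B (p.2.2.2 • eRho) (fderiv ℂ rhoWZ p eZ)
        = B eRho (rhoWZ p) := by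
    intro B
    rw [← hwz]
    simp
  have hXW : rhoPolar eX eW = 1 := by simp [rhoPolar, eX, eW]
  have hYZ : rhoPolar eY eZ = 1 := by simp [rhoPolar, eY, eZ]
  rw [hhL, pd_pd_comp_rhoWZ hg, pd_pd_comp_rhoWZ hg, fderiv_rhoWZ_eX, fderiv_rhoWZ_eY, hXW, hYZ,
    fderiv_clm_apply (c := fderiv ℂ g) (u := fun q => q) hD differentiableAt_fun_id, fderiv_fun_id,
    add_apply, ContinuousLinearMap.comp_id, ContinuousLinearMap.flip_apply]
  linear_combination hsum (fderiv ℂ (fderiv ℂ g) (rhoWZ p))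

theorem hhL_comp_rhoWZ_eq_zero_of_homogeneous (hg : ContDiffAt ℂ 2 g (rhoWZ p))
    (hom : ∀ t : ℂ, t ≠ 0 → ∀ q, g (t • q) = t⁻¹ * g q) :
    hhL (g ∘ rhoWZ) p = 0 := by
  have heuler : (fun q => fderiv ℂ g q q) =ᶠ[𝓝 (rhoWZ p)] fun q => -g q := by
    filter_upwards [hg.eventually (by simp)] with q hq
    have hom_q : ∀ᶠ t in 𝓝 (1 : ℂ), g (t • q) = t ^ (-1 : ℤ) • g q :=
      (eventually_ne_nhds one_ne_zero).mono fun t ht => by simp [hom t ht]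
    simpa using fderiv_apply_self_of_homogeneous (-1) (hq.differentiableAt (by norm_num)) hom_q
  rw [hhL_comp_rhoWZ hg, heuler.fderiv_eq, fderiv_fun_neg]
  simp

end CompRhoWZ

def elementaryState (F : ℂ × ℂ → ℂ) (q : ℂ × ℂ × ℂ) : ℂ :=
  q.1⁻¹ * F (q.2.1 / q.1, q.2.2 / q.1)

theorem elementaryState_smul (F : ℂ × ℂ → ℂ) {t : ℂ} (ht : t ≠ 0) (q : ℂ × ℂ × ℂ) :
    elementaryState F (t • q) = t⁻¹ * elementaryState F q := by
  simp [elementaryState, mul_div_mul_left _ _ ht]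
  ring

theorem contDiffAt_elementaryState {F : ℂ × ℂ → ℂ} {q : ℂ × ℂ × ℂ} (hq : q.1 ≠ 0)
    (hF : AnalyticAt ℂ F (q.2.1 / q.1, q.2.2 / q.1)) :
    ContDiffAt ℂ 2 (elementaryState F) q := by
  have hproj : ContDiffAt ℂ 2 (fun q : ℂ × ℂ × ℂ => (q.2.1 / q.1, q.2.2 / q.1)) q := by
    fun_prop (disch := assumption)
  have hinv : ContDiffAt ℂ 2 (fun q : ℂ × ℂ × ℂ => q.1⁻¹) q := by
    fun_prop (disch := assumption)
  exact hinv.mul (hF.contDiffAt.comp q hproj)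

theorem elementary_states_solve_general
    (V : Set (ℂ × ℂ)) (F0 F1 : ℂ × ℂ → ℂ)
    (hF0 : ∀ q ∈ V, AnalyticAt ℂ F0 q) (hF1 : ∀ q ∈ V, AnalyticAt ℂ F1 q) :
    let U : Set V4 := {p | rho p ≠ 0 ∧ (p.2.2.1 / rho p, p.2.2.2 / rho p) ∈ V}
    let Θ0 : V4 → ℂ := fun p => (rho p)⁻¹ * F0 (p.2.2.1 / rho p, p.2.2.2 / rho p)
    let Θ1 : V4 → ℂ := fun p => (rho p)⁻¹ * F1 (p.2.2.1 / rho p, p.2.2.2 / rho p)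
    ∀ p ∈ U,
      hhL Θ0 p = 0 ∧ hhL Θ1 p = 0 ∧
      hhN Θ0 Θ1 Θ0 p = 0 ∧ hhN Θ0 Θ1 Θ1 p = 0 ∧
      hhE Θ0 Θ1 Θ0 p = 0 ∧ hhE Θ0 Θ1 Θ1 p = 0 := by
  intro U Θ0 Θ1 p ⟨hρ, hq⟩
  have hΘ0 : Θ0 = elementaryState F0 ∘ rhoWZ := rfl
  have hΘ1 : Θ1 = elementaryState F1 ∘ rhoWZ := rfl
  rw [hΘ0, hΘ1]
  have hsmooth : ∀ F : ℂ × ℂ → ℂ, (∀ q ∈ V, AnalyticAt ℂ F q) →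
      ContDiffAt ℂ 2 (elementaryState F) (rhoWZ p) :=
    fun F hF => contDiffAt_elementaryState hρ (hF _ hq)
  have hL : ∀ F : ℂ × ℂ → ℂ, (∀ q ∈ V, AnalyticAt ℂ F q) →
      hhL (elementaryState F ∘ rhoWZ) p = 0 :=
    fun F hF => hhL_comp_rhoWZ_eq_zero_of_homogeneous (hsmooth F hF)
      fun _ ht q => elementaryState_smul F ht q
  have hN : ∀ F : ℂ × ℂ → ℂ, (∀ q ∈ V, AnalyticAt ℂ F q) →
      hhN (elementaryState F0 ∘ rhoWZ) (elementaryState F1 ∘ rhoWZ)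
        (elementaryState F ∘ rhoWZ) p = 0 :=
    fun F hF => hhN_comp_rhoWZ ((hsmooth F0 hF0).differentiableAt two_ne_zero)
      ((hsmooth F1 hF1).differentiableAt two_ne_zero) (hsmooth F hF)
  refine ⟨hL F0 hF0, hL F1 hF1, hN F0 hF0, hN F1 hF1, ?_, ?_⟩
  · rw [hhE_eq_hhL_add_hhN, hL F0 hF0, hN F0 hF0, add_zero]
  · rw [hhE_eq_hhL_add_hhN, hL F1 hF1, hN F1 hF1, add_zero]

/-- the hyper-Hermitian elementary states
`Θ_C := ρ⁻¹ · F_C(w/ρ, z/ρ)`, built from holomorphic `F₀, F₁` on an open `V ⊆ ℂ²`,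
satisfy the linear and the nonlinear part of the hyper-Hermitian equation separately
on `U = {ρ ≠ 0, (w/ρ, z/ρ) ∈ V}`; in particular `E₀ = E₁ = 0` on `U`. -/
theorem elementary_states_solve
    (V : Set (ℂ × ℂ)) (hV : IsOpen V) (F0 F1 : ℂ × ℂ → ℂ)
    (hF0 : ∀ q ∈ V, AnalyticAt ℂ F0 q) (hF1 : ∀ q ∈ V, AnalyticAt ℂ F1 q) :
    let U : Set V4 := {p | rho p ≠ 0 ∧ (p.2.2.1 / rho p, p.2.2.2 / rho p) ∈ V}
    let Θ0 : V4 → ℂ := fun p => (rho p)⁻¹ * F0 (p.2.2.1 / rho p, p.2.2.2 / rho p)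
    let Θ1 : V4 → ℂ := fun p => (rho p)⁻¹ * F1 (p.2.2.1 / rho p, p.2.2.2 / rho p)
    ∀ p ∈ U,
      hhL Θ0 p = 0 ∧ hhL Θ1 p = 0 ∧
      hhN Θ0 Θ1 Θ0 p = 0 ∧ hhN Θ0 Θ1 Θ1 p = 0 ∧
      hhE Θ0 Θ1 Θ0 p = 0 ∧ hhE Θ0 Θ1 Θ1 p = 0 :=
  elementary_states_solve_general V F0 F1 hF0 hF1
end
end

section
/- Let a, b ∈ ℂ and k, l, m, n ∈ ℤ, write ρ := w·x + y·z, and let U := { (x,y,w,z) ∈ ℂ⁴ : ρ ≠ 0, w ≠ 0, z ≠ 0 }. Then the pair Θ₀ := a·w^k·z^l·ρ^{−(k+l+1)}, Θ₁ := b·w^m·z^n·ρ^{−(m+n+1)} satisfies the hyper-Hermitian equation E₀ = E₁ = 0 on U, with the linear and nonlinear parts vanishing separately: L₀ = L₁ = 0 and N₀ = N₁ = 0 on U. -/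
/-! Write `Θ = F (w, z, ρ)`. By the chain rule `∂ₓ = w ∂_ρ` and `∂_y = z ∂_ρ` on such functions, so
every term of the nonlinear part `N_C` is `w²z` or `wz²` times `∂_ρF₀ · ∂²_ρF_C` or `∂_ρF₁ · ∂²_ρF_C`,
and these cancel for arbitrary `F₀, F₁, F_C`. The linear part is
`L_C = (∂_ρ ((𝓔 + 1) F_C)) (w, z, ρ)` with `𝓔 = w ∂_w + z ∂_z + ρ ∂_ρ` the Euler operator, and it vanishes
because `w^k z^l ρ^(-(k+l+1))` is homogeneous of degree `-1`. -/

noncomputable section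

open Filter Topology

section SecondOrderCalculus

variable {𝕜 E F G : Type*} [NontriviallyNormedField 𝕜] [NormedAddCommGroup E] [NormedSpace 𝕜 E]
  [NormedAddCommGroup F] [NormedSpace 𝕜 F] [NormedAddCommGroup G] [NormedSpace 𝕜 G]

theorem fderiv_fderiv_comp_apply {g : F → G} {f : E → F} {x : E}
    (hg : ContDiffAt 𝕜 2 g (f x)) (hf : ContDiffAt 𝕜 2 f x) (u v : E) :
    fderiv 𝕜 (fun y => fderiv 𝕜 (g ∘ f) y v) x u =
      fderiv 𝕜 (fderiv 𝕜 g) (f x) (fderiv 𝕜 f x u) (fderiv 𝕜 f x v) +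
        fderiv 𝕜 g (f x) (fderiv 𝕜 (fun y => fderiv 𝕜 f y v) x u) := by
  have hg' : DifferentiableAt 𝕜 (fderiv 𝕜 g) (f x) :=
    (hg.fderiv_right (m := 1) le_rfl).differentiableAt one_ne_zero
  have hf' : DifferentiableAt 𝕜 (fun y => fderiv 𝕜 f y v) x :=
    ((hf.fderiv_right (m := 1) le_rfl).differentiableAt one_ne_zero).clm_apply
      (differentiableAt_const v)
  have hchain : (fun y => fderiv 𝕜 (g ∘ f) y v) =ᶠ[𝓝 x]
      fun y => fderiv 𝕜 g (f y) (fderiv 𝕜 f y v) := by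
    filter_upwards [hf.continuousAt.eventually (hg.eventually (by simp)), hf.eventually (by simp)]
      with y hgy hfy
    rw [fderiv_comp y (hgy.differentiableAt two_ne_zero) (hfy.differentiableAt two_ne_zero)]
    rfl
  rw [hchain.fderiv_eq, fderiv_clm_apply (c := fun y => fderiv 𝕜 g (f y))
    (hg'.comp x (hf.differentiableAt two_ne_zero)) hf',
    fderiv_fun_comp x hg' (hf.differentiableAt two_ne_zero)]
  simp [add_comm]

theorem fderiv_apply_self_of_homogeneous_s9 {F : E → 𝕜} {x : E} {d : ℤ}
    (hF : DifferentiableAt 𝕜 F x) (hhom : ∀ t : 𝕜, t ≠ 0 → F (t • x) = t ^ d * F x) :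
    fderiv 𝕜 F x x = d * F x := by
  have hline : HasDerivAt (fun t : 𝕜 => F (t • x)) (fderiv 𝕜 F x x) 1 :=
    hF.hasFDerivAt.comp_hasDerivAt_of_eq (1 : 𝕜) (by simpa using (hasDerivAt_id (1 : 𝕜)).smul_const x)
      (one_smul 𝕜 x).symm
  have hpow : HasDerivAt (fun t : 𝕜 => t ^ d * F x) (d * F x) 1 := by
    simpa using (hasDerivAt_zpow d (1 : 𝕜) (Or.inl one_ne_zero)).mul_const (F x)
  refine hline.unique (hpow.congr_of_eventuallyEq ?_)
  filter_upwards [eventually_ne_nhds one_ne_zero] with t ht using hhom t ht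

theorem fderiv_fderiv_apply_self_of_euler {F : E → 𝕜} {x : E} {d : 𝕜}
    (hF : ContDiffAt 𝕜 2 F x) (heuler : ∀ᶠ y in 𝓝 x, fderiv 𝕜 F y y = d * F y) (h : E) :
    fderiv 𝕜 (fderiv 𝕜 F) x h x = (d - 1) * fderiv 𝕜 F x h := by
  have hF' : DifferentiableAt 𝕜 (fderiv 𝕜 F) x :=
    (hF.fderiv_right (m := 1) le_rfl).differentiableAt one_ne_zero
  have hzero : fderiv 𝕜 (fun y => fderiv 𝕜 F y y - d * F y) x = 0 := by
    have : (fun y => fderiv 𝕜 F y y - d * F y) =ᶠ[𝓝 x] fun _ => 0 :=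
      heuler.mono fun y hy => sub_eq_zero.mpr hy
    rw [this.fderiv_eq, fderiv_const_apply]
  rw [fderiv_fun_sub (hF'.clm_apply differentiableAt_fun_id)
    ((hF.differentiableAt two_ne_zero).const_mul d),
    fderiv_clm_apply (u := fun y => y) hF' differentiableAt_fun_id,
    fderiv_const_mul (hF.differentiableAt two_ne_zero)] at hzero
  have := congrArg (fun L => L h) hzero
  simp only [fderiv_fun_id, ContinuousLinearMap.comp_id, sub_apply, add_apply,
    ContinuousLinearMap.flip_apply, smul_apply, smul_eq_mul, zero_apply] at this
  linear_combination this

end SecondOrderCalculus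

def wzRho (p : V4) : ℂ × ℂ × ℂ := (p.2.2.1, p.2.2.2, rho p)

lemma contDiff_wzRho : ContDiff ℂ 2 wzRho := by
  unfold wzRho rho; fun_prop

lemma fderiv_wzRho_apply (q v : V4) :
    fderiv ℂ wzRho q v =
      (v.2.2.1, v.2.2.2, q.2.2.1 * v.1 + q.1 * v.2.2.1 + q.2.1 * v.2.2.2 + q.2.2.2 * v.2.1) := by
  unfold wzRho rho
  rw [DifferentiableAt.fderiv_prodMk (by fun_prop) (by fun_prop),
    DifferentiableAt.fderiv_prodMk (by fun_prop) (by fun_prop)]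
  simp (disch := fun_prop) [fderiv_fun_add, fderiv_fun_mul, fderiv.fst, fderiv.snd]
  ring

lemma fderiv_fderiv_wzRho_apply (q u v : V4) :
    fderiv ℂ (fun y => fderiv ℂ wzRho y v) q u =
      (0, 0, u.2.2.1 * v.1 + u.1 * v.2.2.1 + u.2.1 * v.2.2.2 + u.2.2.2 * v.2.1) := by
  simp_rw [fderiv_wzRho_apply]
  rw [DifferentiableAt.fderiv_prodMk (by fun_prop) (by fun_prop),
    DifferentiableAt.fderiv_prodMk (by fun_prop) (by fun_prop)]
  simp (disch := fun_prop) [fderiv_fun_add, fderiv_mul_const, fderiv.fst, fderiv.snd]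
  ring

lemma pd_comp_wzRho {F : ℂ × ℂ × ℂ → ℂ} {p : V4} (hF : DifferentiableAt ℂ F (wzRho p)) (v : V4) :
    pd v (F ∘ wzRho) p = fderiv ℂ F (wzRho p) (fderiv ℂ wzRho p v) := by
  rw [pd, fderiv_comp p hF (contDiff_wzRho.differentiable two_ne_zero p)]
  rfl

lemma pd_pd_comp_wzRho {F : ℂ × ℂ × ℂ → ℂ} {p : V4} (hF : ContDiffAt ℂ 2 F (wzRho p))
    (u v : V4) :
    pd u (pd v (F ∘ wzRho)) p =
      fderiv ℂ (fderiv ℂ F) (wzRho p) (fderiv ℂ wzRho p u) (fderiv ℂ wzRho p v) +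
        fderiv ℂ F (wzRho p)
          (0, 0, u.2.2.1 * v.1 + u.1 * v.2.2.1 + u.2.1 * v.2.2.2 + u.2.2.2 * v.2.1) := by
  rw [← fderiv_fderiv_wzRho_apply p]
  exact fderiv_fderiv_comp_apply hF contDiff_wzRho.contDiffAt u v

lemma fderiv_wzRho_eX (p : V4) : fderiv ℂ wzRho p eX = p.2.2.1 • (0, 0, 1) := by
  simp [fderiv_wzRho_apply, eX]

lemma fderiv_wzRho_eY (p : V4) : fderiv ℂ wzRho p eY = p.2.2.2 • (0, 0, 1) := by
  simp [fderiv_wzRho_apply, eY]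

lemma fderiv_wzRho_eW (p : V4) : fderiv ℂ wzRho p eW = (1, 0, p.1) := by
  simp [fderiv_wzRho_apply, eW]

lemma fderiv_wzRho_eZ (p : V4) : fderiv ℂ wzRho p eZ = (0, 1, p.2.1) := by
  simp [fderiv_wzRho_apply, eZ]

lemma hhN_comp_wzRho_eq_zero {F₀ F₁ F : ℂ × ℂ × ℂ → ℂ} {p : V4}
    (h₀ : DifferentiableAt ℂ F₀ (wzRho p)) (h₁ : DifferentiableAt ℂ F₁ (wzRho p))
    (hF : ContDiffAt ℂ 2 F (wzRho p)) :
    hhN (F₀ ∘ wzRho) (F₁ ∘ wzRho) (F ∘ wzRho) p = 0 := by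
  simp only [hhN, hhE, hhL, pd_comp_wzRho h₀, pd_comp_wzRho h₁, pd_pd_comp_wzRho hF,
    fderiv_wzRho_eX, fderiv_wzRho_eY]
  simp only [eX, eY]
  simp only [mul_zero, zero_mul, add_zero, Prod.mk_zero_zero, map_zero, map_smul,
    smul_apply, smul_eq_mul]
  ring

lemma map_wzRho (L : ℂ × ℂ × ℂ →L[ℂ] ℂ) (p : V4) :
    L (wzRho p) = p.2.2.1 * L (1, 0, p.1) + p.2.2.2 * L (0, 1, p.2.1) := by
  have : wzRho p = p.2.2.1 • (1, 0, p.1) + p.2.2.2 • (0, 1, p.2.1) := by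
    simp only [wzRho, rho, Prod.smul_mk, Prod.mk_add_mk, smul_eq_mul]
    ext <;> ring
  rw [this, map_add, map_smul, map_smul, smul_eq_mul, smul_eq_mul]

lemma hhL_comp_wzRho_eq_zero {F : ℂ × ℂ × ℂ → ℂ} {p : V4} (hF : ContDiffAt ℂ 2 F (wzRho p))
    (hhom : ∀ t : ℂ, t ≠ 0 → ∀ u, F (t • u) = t ^ (-1 : ℤ) * F u) :
    hhL (F ∘ wzRho) p = 0 := by
  have heuler : ∀ᶠ u in 𝓝 (wzRho p), fderiv ℂ F u u = ((-1 : ℤ) : ℂ) * F u :=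
    (hF.eventually (by simp)).mono fun u hu =>
      fderiv_apply_self_of_homogeneous_s9 (hu.differentiableAt two_ne_zero) fun t ht => hhom t ht u
  -- `L_C = D²F (e₃, (w, z, ρ)) + 2 DF e₃`, which Euler's relation for `DF` turns into `0`.
  have key := fderiv_fderiv_apply_self_of_euler hF heuler (0, 0, 1)
  rw [map_wzRho] at key
  simp only [hhL, pd_pd_comp_wzRho hF, fderiv_wzRho_eX, fderiv_wzRho_eY, fderiv_wzRho_eW,
    fderiv_wzRho_eZ]
  simp only [eX, eY, eW, eZ]
  simp only [map_smul, smul_apply, smul_eq_mul, mul_zero, mul_one, zero_add, add_zero]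
  push_cast at key
  linear_combination key

def laurentMonomial (c : ℂ) (i j s : ℤ) (u : ℂ × ℂ × ℂ) : ℂ :=
  c * u.1 ^ i * u.2.1 ^ j * u.2.2 ^ s

lemma laurentMonomial_smul (c : ℂ) (i j s : ℤ) {t : ℂ} (ht : t ≠ 0) (u : ℂ × ℂ × ℂ) :
    laurentMonomial c i j s (t • u) = t ^ (i + j + s) * laurentMonomial c i j s u := by
  simp only [laurentMonomial, Prod.smul_fst, Prod.smul_snd, smul_eq_mul, mul_zpow,
    zpow_add₀ ht]
  ring

lemma contDiffAt_laurentMonomial (c : ℂ) (i j s : ℤ) {u : ℂ × ℂ × ℂ} (h₁ : u.1 ≠ 0)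
    (h₂ : u.2.1 ≠ 0) (h₃ : u.2.2 ≠ 0) : ContDiffAt ℂ 2 (laurentMonomial c i j s) u := by
  have h₂' : AnalyticAt ℂ (fun u : ℂ × ℂ × ℂ => u.2.1) u := analyticAt_fst.comp analyticAt_snd
  have h₃' : AnalyticAt ℂ (fun u : ℂ × ℂ × ℂ => u.2.2) u := analyticAt_snd.comp analyticAt_snd
  exact (((analyticAt_const.mul (analyticAt_fst.zpow h₁)).mul (h₂'.zpow h₂)).mul
    (h₃'.zpow h₃)).contDiffAt

/-- the explicit elementary states
`Θ₀ = a·w^k·z^l·ρ^{−(k+l+1)}`, `Θ₁ = b·w^m·z^n·ρ^{−(m+n+1)}` (integer powers)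
satisfy the hyper-Hermitian equation on `{ρ ≠ 0, w ≠ 0, z ≠ 0}`, with the linear
and nonlinear parts vanishing separately. -/
theorem explicit_elementary_states_solve (a b : ℂ) (k l m n : ℤ) :
    let U : Set V4 := {p | rho p ≠ 0 ∧ p.2.2.1 ≠ 0 ∧ p.2.2.2 ≠ 0}
    let Θ0 : V4 → ℂ := fun p => a * p.2.2.1 ^ k * p.2.2.2 ^ l * rho p ^ (-(k + l + 1))
    let Θ1 : V4 → ℂ := fun p => b * p.2.2.1 ^ m * p.2.2.2 ^ n * rho p ^ (-(m + n + 1))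
    ∀ p ∈ U,
      hhL Θ0 p = 0 ∧ hhL Θ1 p = 0 ∧
      hhN Θ0 Θ1 Θ0 p = 0 ∧ hhN Θ0 Θ1 Θ1 p = 0 ∧
      hhE Θ0 Θ1 Θ0 p = 0 ∧ hhE Θ0 Θ1 Θ1 p = 0 := by
  intro U Θ0 Θ1 p ⟨hρ, hw, hz⟩
  have hΘ0 : Θ0 = laurentMonomial a k l (-(k + l + 1)) ∘ wzRho := rfl
  have hΘ1 : Θ1 = laurentMonomial b m n (-(m + n + 1)) ∘ wzRho := rfl
  rw [hΘ0, hΘ1]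
  have hsmooth : ∀ c i j s, ContDiffAt ℂ 2 (laurentMonomial c i j s) (wzRho p) :=
    fun c i j s => contDiffAt_laurentMonomial c i j s hw hz hρ
  have hhom : ∀ c i j, ∀ t : ℂ, t ≠ 0 → ∀ u, laurentMonomial c i j (-(i + j + 1)) (t • u) =
      t ^ (-1 : ℤ) * laurentMonomial c i j (-(i + j + 1)) u := fun c i j t ht u => by
    rw [laurentMonomial_smul c i j _ ht, show i + j + -(i + j + 1) = -1 by ring]
  have hL : ∀ c i j, hhL (laurentMonomial c i j (-(i + j + 1)) ∘ wzRho) p = 0 :=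
    fun c i j => hhL_comp_wzRho_eq_zero (hsmooth c i j _) (hhom c i j)
  have hN : ∀ c i j, hhN (laurentMonomial a k l (-(k + l + 1)) ∘ wzRho)
      (laurentMonomial b m n (-(m + n + 1)) ∘ wzRho)
      (laurentMonomial c i j (-(i + j + 1)) ∘ wzRho) p = 0 :=
    fun c i j => hhN_comp_wzRho_eq_zero ((hsmooth a k l _).differentiableAt two_ne_zero)
      ((hsmooth b m n _).differentiableAt two_ne_zero) (hsmooth c i j _)
  have hE : ∀ Θ₀ Θ₁ Θ, hhE Θ₀ Θ₁ Θ p = hhL Θ p + hhN Θ₀ Θ₁ Θ p :=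
    fun _ _ _ => (add_sub_cancel _ _).symm
  refine ⟨hL a k l, hL b m n, hN a k l, hN b m n, ?_, ?_⟩
  · rw [hE, hL a k l, hN a k l, add_zero]
  · rw [hE, hL b m n, hN b m n, add_zero]
end
end

section
/- Let a ∈ ℂ and k, l ∈ ℤ with k + l ≠ 0, write ρ := w·x + y·z, and let U := { (x,y,w,z) ∈ ℂ⁴ : ρ ≠ 0, w ≠ 0, z ≠ 0 }. Set b := −a, m := k+1, n := l−1, and define Θ₀ := a·w^k·z^l·ρ^{−(k+l+1)} and Θ₁ := b·w^m·z^n·ρ^{−(m+n+1)}. Then on U the divergence condition ∂Θ₀/∂x + ∂Θ₁/∂y = 0 holds, and moreover with Θ := (a/(k+l))·w^k·z^{l−1}·ρ^{−(k+l)} one has Θ₀ = −∂Θ/∂y and Θ₁ = ∂Θ/∂x on U. -/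
noncomputable section

/-!
All three functions `Θ₀`, `Θ₁`, `Θ` are monomials `c wᵏ zˡ ρᴺ`. Since `w`, `z` do not depend on
`x`, `y` while `∂ρ/∂x = w` and `∂ρ/∂y = z`, the derivative `∂/∂x` sends such a monomial to
`N c w^(k+1) zˡ ρ^(N-1)` and `∂/∂y` sends it to `N c wᵏ z^(l+1) ρ^(N-1)`; every claim is then an
identity between monomials.
-/

namespace ElementaryStates

variable (c : ℂ) (k l N : ℤ) {p : V4}

theorem pd_monomial {v : V4} (hv : v.2.2 = 0) (hρ : rho p ≠ 0) (hw : p.2.2.1 ≠ 0)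
    (hz : p.2.2.2 ≠ 0) :
    pd v (fun q => c * q.2.2.1 ^ k * q.2.2.2 ^ l * rho q ^ N) p
      = c * N * p.2.2.1 ^ k * p.2.2.2 ^ l * rho p ^ (N - 1) * (p.2.2.1 * v.1 + p.2.2.2 * v.2.1) := by
  have hW := ((hasFDerivAt_id (𝕜 := ℂ) p).snd).snd.fst
  have hZ := ((hasFDerivAt_id (𝕜 := ℂ) p).snd).snd.snd
  have hwk := (hasDerivAt_zpow k _ (Or.inl hw)).comp_hasFDerivAt p hW
  have hzl := (hasDerivAt_zpow l _ (Or.inl hz)).comp_hasFDerivAt p hZ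
  have hrho : HasFDerivAt rho _ p :=
    (hW.mul (hasFDerivAt_id (𝕜 := ℂ) p).fst).add ((hasFDerivAt_id (𝕜 := ℂ) p).snd.fst.mul hZ)
  have hρN := (hasDerivAt_zpow N _ (Or.inl hρ)).comp_hasFDerivAt p hrho
  have hf : HasFDerivAt (fun q : V4 => c * q.2.2.1 ^ k * q.2.2.2 ^ l * rho q ^ N) _ p :=
    (((hasFDerivAt_const c p).mul hwk).mul hzl).mul hρN
  rw [pd, hf.fderiv]
  simp only [id_eq, Pi.mul_apply, Function.comp_apply, ContinuousLinearMap.comp_id, smul_add,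
    add_apply, smul_apply, ContinuousLinearMap.coe_fst', ContinuousLinearMap.comp_apply,
    ContinuousLinearMap.coe_snd', zero_apply, smul_eq_mul, hv, Prod.fst_zero, Prod.snd_zero,
    mul_zero, add_zero, zero_add]
  ring

theorem pd_eX_monomial (hρ : rho p ≠ 0) (hw : p.2.2.1 ≠ 0) (hz : p.2.2.2 ≠ 0) :
    pd eX (fun q => c * q.2.2.1 ^ k * q.2.2.2 ^ l * rho q ^ N) p
      = c * N * p.2.2.1 ^ (k + 1) * p.2.2.2 ^ l * rho p ^ (N - 1) := by
  rw [pd_monomial c k l N rfl hρ hw hz, zpow_add_one₀ hw]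
  simp only [eX]
  ring

theorem pd_eY_monomial (hρ : rho p ≠ 0) (hw : p.2.2.1 ≠ 0) (hz : p.2.2.2 ≠ 0) :
    pd eY (fun q => c * q.2.2.1 ^ k * q.2.2.2 ^ l * rho q ^ N) p
      = c * N * p.2.2.1 ^ k * p.2.2.2 ^ (l + 1) * rho p ^ (N - 1) := by
  rw [pd_monomial c k l N rfl hρ hw hz, zpow_add_one₀ hz]
  simp only [eY]
  ring

end ElementaryStates

open ElementaryStates in
/-- with `b = −a`, `m = k+1`, `n = l−1`, the elementary-state pair
`Θ₀ = a·w^k·z^l·ρ^{−(k+l+1)}`, `Θ₁ = b·w^m·z^n·ρ^{−(m+n+1)}` is divergence free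
(`∂Θ₀/∂x + ∂Θ₁/∂y = 0`) and is the gradient pair of the second-heavenly potential
`Θ = (a/(k+l))·w^k·z^{l−1}·ρ^{−(k+l)}` on `{ρ ≠ 0, w ≠ 0, z ≠ 0}`. -/
theorem elementary_states_gradient_pair (a : ℂ) (k l : ℤ) (hkl : k + l ≠ 0) :
    let b : ℂ := -a
    let m : ℤ := k + 1
    let n : ℤ := l - 1
    let U : Set V4 := {p | rho p ≠ 0 ∧ p.2.2.1 ≠ 0 ∧ p.2.2.2 ≠ 0}
    let Θ0 : V4 → ℂ := fun p => a * p.2.2.1 ^ k * p.2.2.2 ^ l * rho p ^ (-(k + l + 1))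
    let Θ1 : V4 → ℂ := fun p => b * p.2.2.1 ^ m * p.2.2.2 ^ n * rho p ^ (-(m + n + 1))
    let Θ : V4 → ℂ := fun p =>
      (a / ((k + l : ℤ) : ℂ)) * p.2.2.1 ^ k * p.2.2.2 ^ (l - 1) * rho p ^ (-(k + l))
    ∀ p ∈ U,
      pd eX Θ0 p + pd eY Θ1 p = 0 ∧
      Θ0 p = -(pd eY Θ p) ∧ Θ1 p = pd eX Θ p := by
  intro b m n U Θ0 Θ1 Θ p ⟨hρ, hw, hz⟩
  have hmn : -(m + n + 1) = -(k + l + 1) := by omega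
  have hl : l - 1 + 1 = l := by omega
  have hN : -(k + l) - 1 = -(k + l + 1) := by omega
  have hkl' : ((k + l : ℤ) : ℂ) ≠ 0 := by exact_mod_cast hkl
  refine ⟨?_, ?_, ?_⟩
  · rw [pd_eX_monomial _ _ _ _ hρ hw hz, pd_eY_monomial _ _ _ _ hρ hw hz, hmn]
    simp only [b, m, n, hl]
    push_cast
    ring
  · rw [pd_eY_monomial _ _ _ _ hρ hw hz, hl, hN]
    field_simp
    push_cast
    ring
  · rw [pd_eX_monomial _ _ _ _ hρ hw hz, hN]
    simp only [Θ1, hmn]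
    field_simp
    push_cast
    ring
end
end

section
/- Let c ∈ ℂ and k, l ∈ ℤ with k + l ≠ 0, write ρ := w·x + y·z, and let U := { (x,y,w,z) ∈ ℂ⁴ : ρ ≠ 0, w ≠ 0, z ≠ 0 }. Then Θ := c·w^k·z^{l−1}·ρ^{−(k+l)} satisfies the second Plebanski (heavenly) equation P(Θ) = 0 on U; moreover both parts vanish separately: ∂²Θ/∂x∂w + ∂²Θ/∂y∂z = 0 and (∂²Θ/∂x²)·(∂²Θ/∂y²) − (∂²Θ/∂x∂y)² = 0 on U. -/
noncomputable section

/-- The second Plebanski expression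
`P(Θ) := ∂²Θ/∂x∂w + ∂²Θ/∂y∂z + (∂²Θ/∂x²)(∂²Θ/∂y²) − (∂²Θ/∂x∂y)²`. -/
def pleb (Θ : V4 → ℂ) : V4 → ℂ := fun p =>
  pd eX (pd eW Θ) p + pd eY (pd eZ Θ) p
    + pd eX (pd eX Θ) p * pd eY (pd eY Θ) p
    - (pd eX (pd eY Θ) p) ^ 2

/-!
Θ is `c` times the monomial `w^a z^b ρ^e` with `(a, b, e) = (k, l - 1, -(k + l))`. Since
`∂ρ/∂x = w`, `∂ρ/∂y = z`, `∂ρ/∂w = x` and `∂ρ/∂z = y`, the derivatives of such monomials stay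
in the family up to factors `x`, `y`, which recombine into `ρ`: one finds
`(∂x∂w + ∂y∂z)(w^a z^b ρ^e) = e (a + b + e + 1) w^a z^b ρ^(e-1)`, and `a + b + e + 1 = 0` here.
The `(x, y)`-Hessian of a function of `(w, z, ρ)` alone is `∂²_ρ f · (w, z) ⊗ (w, z)`, of rank
one, so its determinant vanishes.
-/

open Filter Set

namespace Plebanski

def domain : Set V4 := {p | rho p ≠ 0 ∧ p.2.2.1 ≠ 0 ∧ p.2.2.2 ≠ 0}

@[fun_prop]
lemma differentiable_rho : Differentiable ℂ rho := by
  unfold rho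
  fun_prop

lemma isOpen_domain : IsOpen domain :=
  (isOpen_ne_fun differentiable_rho.continuous continuous_const).inter
    ((isOpen_ne_fun (by fun_prop) continuous_const).inter
      (isOpen_ne_fun (by fun_prop) continuous_const))

section Calculus

variable {f g : V4 → ℂ} {p : V4} (v : V4)

lemma pd_congr_of_eqOn {s : Set V4} (hs : IsOpen s) (hfg : EqOn f g s) (hp : p ∈ s) :
    pd v f p = pd v g p := by
  simp only [pd, (eventuallyEq_of_mem (hs.mem_nhds hp) hfg).fderiv_eq]

lemma pd_const_mul (c : ℂ) (f : V4 → ℂ) :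
    pd v (fun q => c * f q) = fun q => c * pd v f q := by
  funext q
  change fderiv ℂ (c • f) q v = _
  rw [fderiv_const_smul_field]
  rfl

lemma pd_add (hf : DifferentiableAt ℂ f p) (hg : DifferentiableAt ℂ g p) :
    pd v (fun q => f q + g q) p = pd v f p + pd v g p := by
  simp [pd, fderiv_fun_add hf hg]

lemma pd_mul (hf : DifferentiableAt ℂ f p) (hg : DifferentiableAt ℂ g p) :
    pd v (fun q => f q * g q) p = pd v f p * g p + f p * pd v g p := by
  simp only [pd, fderiv_fun_mul hf hg, add_apply,
    smul_apply, smul_eq_mul]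
  ring

lemma pd_zpow (hf : DifferentiableAt ℂ f p) (hp : f p ≠ 0) (n : ℤ) :
    pd v (fun q => f q ^ n) p = n * f p ^ (n - 1) * pd v f p := by
  have h := (hasDerivAt_zpow n (f p) (Or.inl hp)).comp_hasFDerivAt p hf.hasFDerivAt
  simp only [Function.comp_def] at h
  simp only [pd, h.fderiv, smul_apply, smul_eq_mul, mul_assoc]

lemma pd_fst : pd v (fun q => q.1) p = v.1 := by
  simp [pd, hasFDerivAt_fst.fderiv]

lemma pd_snd_fst : pd v (fun q => q.2.1) p = v.2.1 := by
  simp [pd, (hasFDerivAt_snd (𝕜 := ℂ) (p := p)).fst.fderiv]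

lemma pd_snd_snd_fst : pd v (fun q => q.2.2.1) p = v.2.2.1 := by
  simp [pd, (hasFDerivAt_snd (𝕜 := ℂ) (p := p)).snd.fst.fderiv]

lemma pd_snd_snd_snd : pd v (fun q => q.2.2.2) p = v.2.2.2 := by
  simp [pd, (hasFDerivAt_snd (𝕜 := ℂ) (p := p)).snd.snd.fderiv]

lemma pd_rho :
    pd v rho p = p.2.2.1 * v.1 + p.1 * v.2.2.1 + (p.2.1 * v.2.2.2 + p.2.2.2 * v.2.1) := by
  change pd v (fun q => q.2.2.1 * q.1 + q.2.1 * q.2.2.2) p = _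
  rw [pd_add _ (by fun_prop) (by fun_prop), pd_mul _ (by fun_prop) (by fun_prop),
    pd_mul _ (by fun_prop) (by fun_prop), pd_fst, pd_snd_fst, pd_snd_snd_fst, pd_snd_snd_snd]
  ring

end Calculus

def monomial (a b e : ℤ) : V4 → ℂ := fun p => p.2.2.1 ^ a * p.2.2.2 ^ b * rho p ^ e

section Monomial

variable {p : V4} (a b e : ℤ)

lemma differentiableAt_monomial (hp : p ∈ domain) :
    DifferentiableAt ℂ (monomial a b e) p := by
  obtain ⟨hρ, hw, hz⟩ := hp
  unfold monomial
  fun_prop (disch := simp [*])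

lemma pd_monomial (v : V4) (hp : p ∈ domain) :
    pd v (monomial a b e) p
      = a * v.2.2.1 * monomial (a - 1) b e p + b * v.2.2.2 * monomial a (b - 1) e p
        + e * pd v rho p * monomial a b (e - 1) p := by
  obtain ⟨hρ, hw, hz⟩ := hp
  have dw : DifferentiableAt ℂ (fun q : V4 => q.2.2.1 ^ a) p := by fun_prop (disch := simp [hw])
  have dz : DifferentiableAt ℂ (fun q : V4 => q.2.2.2 ^ b) p := by fun_prop (disch := simp [hz])
  have dρ : DifferentiableAt ℂ (fun q => rho q ^ e) p := by fun_prop (disch := simp [hρ])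
  unfold monomial
  rw [pd_mul _ (dw.fun_mul dz) dρ, pd_mul _ dw dz, pd_zpow _ (by fun_prop) hw,
    pd_zpow _ (by fun_prop) hz, pd_zpow _ (by fun_prop) hρ, pd_snd_snd_fst, pd_snd_snd_snd]
  ring

variable {a b e}

lemma monomial_add_one_left (hw : p.2.2.1 ≠ 0) :
    monomial (a + 1) b e p = p.2.2.1 * monomial a b e p := by
  simp only [monomial, zpow_add_one₀ hw]
  ring

lemma monomial_add_one_mid (hz : p.2.2.2 ≠ 0) :
    monomial a (b + 1) e p = p.2.2.2 * monomial a b e p := by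
  simp only [monomial, zpow_add_one₀ hz]
  ring

lemma monomial_add_one_right (hρ : rho p ≠ 0) :
    monomial a b (e + 1) p = rho p * monomial a b e p := by
  simp only [monomial, zpow_add_one₀ hρ]
  ring

lemma fst_mul_monomial_add_snd_fst_mul_monomial (hp : p ∈ domain) :
    p.1 * monomial (a + 1) b e p + p.2.1 * monomial a (b + 1) e p = monomial a b (e + 1) p := by
  obtain ⟨hρ, hw, hz⟩ := hp
  rw [monomial_add_one_left hw, monomial_add_one_mid hz, monomial_add_one_right hρ, rho]
  ring

variable (a b e)

lemma pd_eX_monomial :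
    EqOn (pd eX (monomial a b e)) (fun q => e * monomial (a + 1) b (e - 1) q) domain := by
  intro q hq
  rw [pd_monomial _ _ _ _ hq, pd_rho]
  simp only [eX, monomial_add_one_left hq.2.1]
  ring

lemma pd_eY_monomial :
    EqOn (pd eY (monomial a b e)) (fun q => e * monomial a (b + 1) (e - 1) q) domain := by
  intro q hq
  rw [pd_monomial _ _ _ _ hq, pd_rho]
  simp only [eY, monomial_add_one_mid hq.2.2]
  ring

lemma pd_eW_monomial : EqOn (pd eW (monomial a b e))
    (fun q => a * monomial (a - 1) b e q + e * (q.1 * monomial a b (e - 1) q)) domain := by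
  intro q hq
  rw [pd_monomial _ _ _ _ hq, pd_rho]
  simp only [eW]
  ring

lemma pd_eZ_monomial : EqOn (pd eZ (monomial a b e))
    (fun q => b * monomial a (b - 1) e q + e * (q.2.1 * monomial a b (e - 1) q)) domain := by
  intro q hq
  rw [pd_monomial _ _ _ _ hq, pd_rho]
  simp only [eZ]
  ring

variable {a b e}

lemma pd_eX_pd_eW_monomial (hp : p ∈ domain) :
    pd eX (pd eW (monomial a b e)) p
      = (a + 1) * e * monomial a b (e - 1) p
        + e * (e - 1) * p.1 * monomial (a + 1) b (e - 1 - 1) p := by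
  have dm := differentiableAt_monomial a b (e - 1) hp
  rw [pd_congr_of_eqOn eX isOpen_domain (pd_eW_monomial a b e) hp,
    pd_add _ ((differentiableAt_monomial _ _ _ hp).const_mul _)
      ((differentiableAt_fst.fun_mul dm).const_mul _)]
  simp only [pd_const_mul]
  rw [pd_mul _ differentiableAt_fst dm, pd_fst, pd_eX_monomial _ _ _ hp,
    pd_eX_monomial _ _ _ hp, sub_add_cancel]
  simp only [eX]
  push_cast
  ring

lemma pd_eY_pd_eZ_monomial (hp : p ∈ domain) :
    pd eY (pd eZ (monomial a b e)) p
      = (b + 1) * e * monomial a b (e - 1) p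
        + e * (e - 1) * p.2.1 * monomial a (b + 1) (e - 1 - 1) p := by
  have dm := differentiableAt_monomial a b (e - 1) hp
  rw [pd_congr_of_eqOn eY isOpen_domain (pd_eZ_monomial a b e) hp,
    pd_add _ ((differentiableAt_monomial _ _ _ hp).const_mul _)
      ((differentiableAt_snd.fst.fun_mul dm).const_mul _)]
  simp only [pd_const_mul]
  rw [pd_mul _ differentiableAt_snd.fst dm, pd_snd_fst, pd_eY_monomial _ _ _ hp,
    pd_eY_monomial _ _ _ hp, sub_add_cancel]
  simp only [eY]
  push_cast
  ring

lemma pd_eX_pd_eW_add_pd_eY_pd_eZ_monomial (hp : p ∈ domain) :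
    pd eX (pd eW (monomial a b e)) p + pd eY (pd eZ (monomial a b e)) p
      = e * (a + b + e + 1) * monomial a b (e - 1) p := by
  have hρ := fst_mul_monomial_add_snd_fst_mul_monomial (a := a) (b := b) (e := e - 1 - 1) hp
  rw [sub_add_cancel] at hρ
  rw [pd_eX_pd_eW_monomial hp, pd_eY_pd_eZ_monomial hp]
  linear_combination e * (e - 1) * hρ

lemma xy_hessian_det_monomial_eq_zero (hp : p ∈ domain) :
    pd eX (pd eX (monomial a b e)) p * pd eY (pd eY (monomial a b e)) p
      - pd eX (pd eY (monomial a b e)) p ^ 2 = 0 := by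
  have pd_pd {u : V4} {a' b' : ℤ}
      (hu : EqOn (pd u (monomial a b e)) (fun q => e * monomial a' b' (e - 1) q) domain)
      (v : V4) : pd v (pd u (monomial a b e)) p = e * pd v (monomial a' b' (e - 1)) p := by
    rw [pd_congr_of_eqOn v isOpen_domain hu hp, pd_const_mul]
  rw [pd_pd (pd_eX_monomial a b e), pd_pd (pd_eY_monomial a b e), pd_pd (pd_eY_monomial a b e),
    pd_eX_monomial _ _ _ hp, pd_eY_monomial _ _ _ hp, pd_eX_monomial _ _ _ hp]
  simp only [monomial_add_one_left hp.2.1, monomial_add_one_mid hp.2.2]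
  ring

end Monomial

end Plebanski

open Plebanski in
theorem elementary_state_plebanski_potential_general (c : ℂ) (k l : ℤ) :
    let U : Set V4 := {p | rho p ≠ 0 ∧ p.2.2.1 ≠ 0 ∧ p.2.2.2 ≠ 0}
    let Θ : V4 → ℂ := fun p => c * p.2.2.1 ^ k * p.2.2.2 ^ (l - 1) * rho p ^ (-(k + l))
    ∀ p ∈ U,
      pleb Θ p = 0 ∧
      pd eX (pd eW Θ) p + pd eY (pd eZ Θ) p = 0 ∧
      pd eX (pd eX Θ) p * pd eY (pd eY Θ) p - (pd eX (pd eY Θ) p) ^ 2 = 0 := by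
  intro U Θ p hp
  replace hp : p ∈ domain := hp
  have hΘ : Θ = fun q => c * monomial k (l - 1) (-(k + l)) q := by
    funext q
    simp only [Θ, monomial]
    ring
  have hlin : pd eX (pd eW Θ) p + pd eY (pd eZ Θ) p = 0 := by
    simp only [hΘ, pd_const_mul]
    rw [← mul_add, pd_eX_pd_eW_add_pd_eY_pd_eZ_monomial hp]
    push_cast
    ring
  have hdet : pd eX (pd eX Θ) p * pd eY (pd eY Θ) p - (pd eX (pd eY Θ) p) ^ 2 = 0 := by
    simp only [hΘ, pd_const_mul]
    linear_combination c ^ 2 * xy_hessian_det_monomial_eq_zero hp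
  exact ⟨by unfold pleb; linear_combination hlin + hdet, hlin, hdet⟩

/-- `Θ = c·w^k·z^{l−1}·ρ^{−(k+l)}` (with `k + l ≠ 0`) satisfies the
second Plebanski equation `P(Θ) = 0` on `{ρ ≠ 0, w ≠ 0, z ≠ 0}`; moreover the linear
and quadratic parts of `P(Θ)` vanish separately. -/
theorem elementary_state_plebanski_potential (c : ℂ) (k l : ℤ) (hkl : k + l ≠ 0) :
    let U : Set V4 := {p | rho p ≠ 0 ∧ p.2.2.1 ≠ 0 ∧ p.2.2.2 ≠ 0}
    let Θ : V4 → ℂ := fun p => c * p.2.2.1 ^ k * p.2.2.2 ^ (l - 1) * rho p ^ (-(k + l))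
    ∀ p ∈ U,
      pleb Θ p = 0 ∧
      pd eX (pd eW Θ) p + pd eY (pd eZ Θ) p = 0 ∧
      pd eX (pd eX Θ) p * pd eY (pd eY Θ) p - (pd eX (pd eY Θ) p) ^ 2 = 0 :=
  elementary_state_plebanski_potential_general c k l
end
end
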